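/- If a class of graphs has the strong Erdős–Hajnal property then it has the Erdős–Hajnal property: if there exists ε > 0 such that every graph G in a hereditary class 𝒢 with |V(G)| > 1 has disjoint sets A, B with |A|, |B| ≥ ε|V(G)| and A complete or anticomplete to B, then there exists c > 0 such that max{α(G), ω(G)} ≥ |V(G)|^c for every G ∈ 𝒢. -/

import Mathlib

open SimpleGraph

/-- Sets `A`, `B` are complete to each other: disjoint with all edges between them. -/
def Complete {V : Type} (G : SimpleGraph V) (A B : Set V) : Prop :=
  Disjoint A B ∧ ∀ a ∈ A, ∀ b ∈ B, G.Adj a b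

/-- Sets `A`, `B` are anticomplete: disjoint with no edges between them. -/
def Anticomplete {V : Type} (G : SimpleGraph V) (A B : Set V) : Prop :=
  Disjoint A B ∧ ∀ a ∈ A, ∀ b ∈ B, ¬ G.Adj a b

/-- `V1 = N(u) \ N[v]`. -/
def sideA {V : Type} (G : SimpleGraph V) (u v : V) : Set V :=
  G.neighborSet u \ insert v (G.neighborSet v)

/-- `V2 = N(v) \ N[u]`. -/
def sideB {V : Type} (G : SimpleGraph V) (u v : V) : Set V :=
  G.neighborSet v \ insert u (G.neighborSet u)

/-- `V3 = N(u) ∩ N(v)`. -/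
def sideC {V : Type} (G : SimpleGraph V) (u v : V) : Set V :=
  G.neighborSet u ∩ G.neighborSet v

/-- The pair `{a, b}` crosses one of the three pairs of sets `(V1,V2)`, `(V2,V3)`, `(V1,V3)`. -/
def pivotCross {V : Type} (G : SimpleGraph V) (u v a b : V) : Prop :=
  (a ∈ sideA G u v ∧ b ∈ sideB G u v) ∨ (a ∈ sideB G u v ∧ b ∈ sideA G u v) ∨
  (a ∈ sideB G u v ∧ b ∈ sideC G u v) ∨ (a ∈ sideC G u v ∧ b ∈ sideB G u v) ∨
  (a ∈ sideA G u v ∧ b ∈ sideC G u v) ∨ (a ∈ sideC G u v ∧ b ∈ sideA G u v)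

lemma pivotCross_comm {V : Type} {G : SimpleGraph V} {u v a b : V} :
    pivotCross G u v a b ↔ pivotCross G u v b a := by
  unfold pivotCross; tauto

/-- The pivot `G ∧ uv`: complement the edges between each of the pairs `(V1,V2)`, `(V2,V3)`,
`(V1,V3)` and then swap the labels of `u` and `v`. -/
def pivotGraph {V : Type} (G : SimpleGraph V) (u v : V) : SimpleGraph V :=
  letI := Classical.decEq V
  { Adj := fun x y => x ≠ y ∧
      Xor' (G.Adj (Equiv.swap u v x) (Equiv.swap u v y))
        (pivotCross G u v (Equiv.swap u v x) (Equiv.swap u v y)),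
    symm := ⟨by
      rintro x y ⟨hxy, h⟩
      refine ⟨hxy.symm, ?_⟩
      have h1 : G.Adj (Equiv.swap u v x) (Equiv.swap u v y) ↔
          G.Adj (Equiv.swap u v y) (Equiv.swap u v x) := G.adj_comm _ _
      have h2 : pivotCross G u v (Equiv.swap u v x) (Equiv.swap u v y) ↔
          pivotCross G u v (Equiv.swap u v y) (Equiv.swap u v x) := pivotCross_comm
      unfold Xor' Xor at h ⊢
      tauto⟩,
    loopless := ⟨fun _ h => h.1 rfl⟩ }

/-- `H` is a pivot-minor of `G`: `H` is obtainable from `G` (up to isomorphism) by a sequence of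
vertex deletions and pivots of edges. -/
inductive IsPivotMinor : ∀ {W U : Type}, SimpleGraph W → SimpleGraph U → Prop
  | of_iso {W U : Type} {H : SimpleGraph W} {G : SimpleGraph U} :
      Nonempty (H ≃g G) → IsPivotMinor H G
  | pivot {W U : Type} {H : SimpleGraph W} {G : SimpleGraph U} (u v : U) :
      G.Adj u v → IsPivotMinor H (pivotGraph G u v) → IsPivotMinor H G
  | delete {W U : Type} {H : SimpleGraph W} {G : SimpleGraph U} (s : Set U) :
      IsPivotMinor H (G.induce s) → IsPivotMinor H G

/-- `G` is obtained from `H` by replacing each edge `uv` of `H` with a path whose length satisfies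
`P u v h`: there are internally disjoint induced paths of `G` joining the images of the branch
vertices, covering all of `G`, whose edges are exactly the edges of `G`. -/
def IsEdgeReplacement {U W : Type} (H : SimpleGraph U)
    (P : ∀ u v : U, H.Adj u v → ℕ → Prop) (G : SimpleGraph W) : Prop :=
  ∃ (x : U ↪ W) (p : ∀ u v : U, H.Adj u v → G.Walk (x u) (x v)),
    (∀ u v h, (p u v h).IsPath) ∧
    (∀ u v h, P u v h (p u v h).length) ∧
    (∀ u v h, p v u h.symm = (p u v h).reverse) ∧
    (∀ u v h w, w ∈ (p u v h).support → w ∈ Set.range x → w = x u ∨ w = x v) ∧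
    (∀ u v h k l h', s(u, v) ≠ s(k, l) →
      ∀ w, w ∈ (p u v h).support → w ∈ (p k l h').support → w ∈ Set.range x) ∧
    (∀ w : W, w ∈ Set.range x ∨ ∃ u v h, w ∈ (p u v h).support) ∧
    (∀ a b : W, G.Adj a b ↔ ∃ u v h, (p u v h).toSubgraph.Adj a b)

/-- `G` is obtained from `H` by replacing each edge with a path whose length satisfies `P`. -/
def IsSubdivisionWith {U W : Type} (H : SimpleGraph U) (P : ℕ → Prop) (G : SimpleGraph W) : Prop :=
  IsEdgeReplacement H (fun _ _ _ n => P n) G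

/-- An `F`-filleting of `G`: subdivide (at least once) every edge of `G` not in `F`, and do not
subdivide the edges of `F`. -/
def IsFilleting {U W : Type} (G F : SimpleGraph U) (H : SimpleGraph W) : Prop :=
  IsEdgeReplacement G (fun u v _ n => (F.Adj u v ∧ n = 1) ∨ (¬ F.Adj u v ∧ 2 ≤ n)) H

/-- Join of `H` with a single new vertex (`H + K_1`), the new vertex being `none`. -/
def addApex {W : Type} (H : SimpleGraph W) : SimpleGraph (Option W) :=
  SimpleGraph.fromRel fun a b =>
    a = none ∨ ∃ u v : W, a = some u ∧ b = some v ∧ H.Adj u v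

/-- `F` with ends `a`, `b` is a fuzzy odd path (with length satisfying `P`): it consists of an odd
path from `a` to `b` through all the vertices, possibly together with one extra edge `xy` between
two internal vertices such that `xy` lies in a triangle. -/
def IsFuzzyOddPath {T : Type} (F : SimpleGraph T) (a b : T) (P : ℕ → Prop) : Prop :=
  ∃ p : F.Walk a b, p.IsPath ∧ Odd p.length ∧ P p.length ∧ (∀ t : T, t ∈ p.support) ∧
    ((∀ c d : T, F.Adj c d ↔ p.toSubgraph.Adj c d) ∨
      ∃ x y : T, x ∈ p.support ∧ y ∈ p.support ∧ x ≠ a ∧ x ≠ b ∧ y ≠ a ∧ y ≠ b ∧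
        F.Adj x y ∧ ¬ p.toSubgraph.Adj x y ∧ (∃ z : T, F.Adj x z ∧ F.Adj y z) ∧
        (∀ c d : T, F.Adj c d ↔ (p.toSubgraph.Adj c d ∨ (c = x ∧ d = y) ∨ (c = y ∧ d = x))))

/-- `G` is a proper fuzzy odd subdivision of `H`: `G` is obtained from `H` by replacing each edge
with a fuzzy odd path of (odd) length at least `3`. -/
def IsProperFuzzyOddSubdivision {U W : Type} (H : SimpleGraph U) (G : SimpleGraph W) : Prop :=
  ∃ (x : U ↪ W) (S : ∀ u v : U, H.Adj u v → Set W)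
    (hS : ∀ u v h, x u ∈ S u v h ∧ x v ∈ S u v h),
    (∀ u v h, S v u h.symm = S u v h) ∧
    (∀ u v h w, w ∈ S u v h → w ∈ Set.range x → w = x u ∨ w = x v) ∧
    (∀ u v h k l h', s(u, v) ≠ s(k, l) → ∀ w, w ∈ S u v h → w ∈ S k l h' → w ∈ Set.range x) ∧
    (∀ w : W, w ∈ Set.range x ∨ ∃ u v h, w ∈ S u v h) ∧
    (∀ a b : W, G.Adj a b → ∃ u v h, a ∈ S u v h ∧ b ∈ S u v h) ∧
    (∀ u v h, IsFuzzyOddPath (G.induce (S u v h))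
      ⟨x u, (hS u v h).1⟩ ⟨x v, (hS u v h).2⟩ (fun n => 3 ≤ n))

/-- A mass on a graph `G`. -/
structure IsMass {V : Type} (G : SimpleGraph V) (μ : Set V → ℝ) : Prop where
  map_empty : μ ∅ = 0
  map_univ : μ Set.univ = 1
  mono : ∀ ⦃X Y : Set V⦄, X ⊆ Y → μ X ≤ μ Y
  subadditive : ∀ X Y : Set V, μ (X ∪ Y) ≤ μ X + μ Y

/-- `N^r[v]`: the ball of radius `r` about `v`. -/
def ball {V : Type} (G : SimpleGraph V) (v : V) (r : ℕ) : Set V :=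
  {w | ∃ p : G.Walk v w, p.length ≤ r}

/-- `(G, μ)` is `ε`-coherent. -/
def EpsCoherent {V : Type} (G : SimpleGraph V) (μ : Set V → ℝ) (ε : ℝ) : Prop :=
  (∀ v : V, μ {v} < ε) ∧ (∀ v : V, μ (G.neighborSet v) < ε) ∧
  ∀ A B : Set V, Anticomplete G A B → min (μ A) (μ B) < ε

/-- `(G, μ)` is `(ε, r)`-coherent. -/
def EpsRCoherent {V : Type} (G : SimpleGraph V) (μ : Set V → ℝ) (ε : ℝ) (r : ℕ) : Prop :=
  (∀ v : V, μ (_root_.ball G v r) < ε) ∧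
  ∀ A B : Set V, Anticomplete G A B → min (μ A) (μ B) < ε

/-- `(G, μ)` is `(δ, r)`-focused. -/
def Focused {V : Type} (G : SimpleGraph V) (μ : Set V → ℝ) (δ : ℝ) (r : ℕ) : Prop :=
  ∀ Z : Set V, δ ≤ μ Z → ∃ v : Z, μ Z / 2 ≤ μ (Subtype.val '' _root_.ball (G.induce Z) v r)

/-- `N[X]`. -/
def closedNbhd {V : Type} (G : SimpleGraph V) (X : Set V) : Set V :=
  X ∪ {w | ∃ a ∈ X, G.Adj a w}

/-- `x` is an `r`-centre of `X`: every vertex of `X` is within distance `r` of `x` in `G[X]`. -/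
def IsCentre {V : Type} (G : SimpleGraph V) (X : Set V) (x : V) (hx : x ∈ X) (r : ℕ) : Prop :=
  ∀ y : X, ∃ p : (G.induce X).Walk ⟨x, hx⟩ y, p.length ≤ r

/-- A leaf: a vertex of degree at most 1. -/
def IsLeaf {V : Type} (G : SimpleGraph V) (v : V) : Prop := (G.neighborSet v).Subsingleton

/-- `P` is a path graph. -/
def IsPathGraph {U : Type} (P : SimpleGraph U) : Prop :=
  ∃ (a b : U) (w : P.Walk a b), w.IsPath ∧ (∀ u : U, u ∈ w.support) ∧
    ∀ x y : U, P.Adj x y ↔ w.toSubgraph.Adj x y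

/-- A caterpillar: a tree `T` such that `T − L(T)` is a path. -/
def IsCaterpillar {U : Type} (T : SimpleGraph U) : Prop :=
  T.IsTree ∧ IsPathGraph (T.induce {v | ¬ IsLeaf T v})

/-- Disjoint union of `q` stars, each with `p` leaves: `(i, none)` is the centre of the `i`-th
star and `(i, some j)` its leaves. -/
def starForest (q p : ℕ) : SimpleGraph (Fin q × Option (Fin p)) :=
  SimpleGraph.fromRel fun a b => a.1 = b.1 ∧ a.2 = none ∧ b.2 ≠ none

/-- The clique number `ω(G)`. -/
noncomputable def cliqueNumber {V : Type} [Fintype V] (G : SimpleGraph V) : ℕ :=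
  sSup {n | ∃ s : Finset V, G.IsNClique n s}

/-- The independence number `α(G)`. -/
noncomputable def indepNumber {V : Type} [Fintype V] (G : SimpleGraph V) : ℕ :=
  cliqueNumber Gᶜ

/-!
Write `f(G) = α(G) ω(G)`. If `A` is complete to `B` then cliques of `G[A]` and `G[B]` combine,
so `ω(G) ≥ ω(G[A]) + ω(G[B])`, while `α(G) ≥ α(G[A]), α(G[B])`; hence
`f(G) ≥ f(G[A]) + f(G[B])`, and symmetrically when `A` is anticomplete to `B`. Choosing `c > 0`
with `ε ^ c ≥ 1/2`, strong induction on `n = |V(G)|` gives `f(G) ≥ (εn)^c + (εn)^c ≥ n^c`, and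
then `max(α(G), ω(G)) ≥ √f(G) ≥ n^(c/2)`.
-/

lemma cliqueNumber_eq_cliqueNum {V : Type} [Fintype V] (G : SimpleGraph V) :
    cliqueNumber G = G.cliqueNum :=
  rfl

lemma indepNumber_eq_indepNum {V : Type} [Fintype V] (G : SimpleGraph V) :
    indepNumber G = G.indepNum :=
  cliqueNum_compl

lemma Anticomplete.complete_compl {V : Type} {G : SimpleGraph V} {A B : Set V}
    (h : Anticomplete G A B) : Complete Gᶜ A B :=
  ⟨h.1, fun a ha b hb => ⟨fun hab => h.1.ne_of_mem ha hb hab, h.2 a ha b hb⟩⟩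

namespace SimpleGraph

lemma compl_induce {V : Type} (G : SimpleGraph V) (s : Set V) :
    (G.induce s)ᶜ = Gᶜ.induce s := by
  ext a b
  simp [Subtype.ext_iff]

variable {V : Type} [Finite V] {G : SimpleGraph V} {A B : Set V}

lemma indepNum_induce_le (s : Set V) : (G.induce s).indepNum ≤ G.indepNum := by
  simpa only [← cliqueNum_compl, compl_induce] using Gᶜ.cliqueNum_induce_le s

lemma cliqueNum_induce_add_le_of_complete (h : Complete G A B) :
    (G.induce A).cliqueNum + (G.induce B).cliqueNum ≤ G.cliqueNum := by
  classical
  obtain ⟨s, hs⟩ := (G.induce A).exists_isNClique_cliqueNum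
  obtain ⟨t, ht⟩ := (G.induce B).exists_isNClique_cliqueNum
  rw [isNClique_induce_iff] at hs ht
  have hsA : ∀ x ∈ s.map (.subtype _), x ∈ A := fun _ hx => by
    obtain ⟨y, -, rfl⟩ := Finset.mem_map.1 hx
    exact y.2
  have htB : ∀ x ∈ t.map (.subtype _), x ∈ B := fun _ hx => by
    obtain ⟨y, -, rfl⟩ := Finset.mem_map.1 hx
    exact y.2
  have hdisj : Disjoint (s.map (.subtype _)) (t.map (.subtype _)) :=
    Finset.disjoint_left.2 fun x hxs hxt => h.1.ne_of_mem (hsA x hxs) (htB x hxt) rfl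
  have hclique : G.IsClique ↑(s.map (.subtype _) ∪ t.map (.subtype _)) := by
    rw [Finset.coe_union, isClique_iff, Set.pairwise_union]
    refine ⟨hs.isClique, ht.isClique, fun a ha b hb _ => ?_⟩
    have hab := h.2 a (hsA a ha) b (htB b hb)
    exact ⟨hab, hab.symm⟩
  calc (G.induce A).cliqueNum + (G.induce B).cliqueNum
      = (s.map (.subtype _) ∪ t.map (.subtype _)).card := by
        rw [Finset.card_union_of_disjoint hdisj, hs.card_eq, ht.card_eq]
    _ ≤ G.cliqueNum := hclique.card_le_cliqueNum

lemma indepNum_induce_add_le_of_anticomplete (h : Anticomplete G A B) :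
    (G.induce A).indepNum + (G.induce B).indepNum ≤ G.indepNum := by
  simpa only [← cliqueNum_compl, compl_induce] using
    cliqueNum_induce_add_le_of_complete h.complete_compl

lemma indepNum_mul_cliqueNum_induce_add_le (h : Complete G A B ∨ Anticomplete G A B) :
    (G.induce A).indepNum * (G.induce A).cliqueNum +
      (G.induce B).indepNum * (G.induce B).cliqueNum ≤ G.indepNum * G.cliqueNum := by
  have hαA := G.indepNum_induce_le A
  have hαB := G.indepNum_induce_le B
  have hωA := G.cliqueNum_induce_le A
  have hωB := G.cliqueNum_induce_le B
  rcases h with hc | ha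
  · have := cliqueNum_induce_add_le_of_complete hc
    nlinarith
  · have := indepNum_induce_add_le_of_anticomplete ha
    nlinarith

end SimpleGraph

open Filter Topology in
lemma exists_pos_half_le_rpow {ε : ℝ} (hε : 0 < ε) : ∃ c : ℝ, 0 < c ∧ 1 / 2 ≤ ε ^ c := by
  have hlim : ∀ᶠ c in 𝓝[>] (0 : ℝ), 1 / 2 < ε ^ c := by
    refine nhdsWithin_le_nhds ((Real.continuousAt_const_rpow hε.ne').eventually ?_)
    exact lt_mem_nhds (by norm_num)
  obtain ⟨c, hεc, hc⟩ := (hlim.and self_mem_nhdsWithin).exists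
  exact ⟨c, hc, hεc.le⟩

lemma half_rpow_le_rpow_of_mul_le {ε c n a : ℝ} (hε : 0 ≤ ε) (hc : 0 ≤ c)
    (hεc : 1 / 2 ≤ ε ^ c) (hn : 0 ≤ n) (h : ε * n ≤ a) : n ^ c / 2 ≤ a ^ c :=
  calc n ^ c / 2 ≤ ε ^ c * n ^ c := by nlinarith [Real.rpow_nonneg hn c]
    _ = (ε * n) ^ c := (Real.mul_rpow hε hn).symm
    _ ≤ a ^ c := Real.rpow_le_rpow (by positivity) h hc

lemma rpow_half_le_max_of_rpow_le_mul {x c : ℝ} {a b : ℕ} (hx : 0 ≤ x)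
    (h : x ^ c ≤ (a * b : ℕ)) : x ^ (c / 2) ≤ (max a b : ℕ) := by
  refine le_of_pow_le_pow_left₀ two_ne_zero (Nat.cast_nonneg _) ?_
  calc (x ^ (c / 2)) ^ 2 = x ^ c := by rw [← Real.rpow_mul_natCast hx]; norm_num
    _ ≤ (a * b : ℕ) := h
    _ ≤ ((max a b : ℕ) : ℝ) ^ 2 := by
      rw [sq]
      exact_mod_cast Nat.mul_le_mul (le_max_left a b) (le_max_right a b)

theorem rpow_card_le_indepNum_mul_cliqueNum (𝒢 : ∀ ⦃V : Type⦄, SimpleGraph V → Prop)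
    (hind : ∀ {V : Type} (G : SimpleGraph V) (s : Set V), 𝒢 G → 𝒢 (G.induce s))
    {ε c : ℝ} (hε : 0 < ε) (hc : 0 < c) (hεc : 1 / 2 ≤ ε ^ c)
    (hSEH : ∀ (V : Type) [Fintype V] (G : SimpleGraph V), 𝒢 G → 1 < Fintype.card V →
      ∃ A B : Set V, ε * (Fintype.card V : ℝ) ≤ (A.ncard : ℝ) ∧
        ε * (Fintype.card V : ℝ) ≤ (B.ncard : ℝ) ∧
        (Complete G A B ∨ Anticomplete G A B))
    (V : Type) [Fintype V] (G : SimpleGraph V) (hG : 𝒢 G) :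
    (Fintype.card V : ℝ) ^ c ≤ (G.indepNum * G.cliqueNum : ℕ) := by
  classical
  induction hn : Fintype.card V using Nat.strong_induction_on generalizing V with
  | _ n ih =>
  rcases Nat.lt_or_ge n 2 with hn2 | hn2
  · interval_cases n
    · rw [Nat.cast_zero, Real.zero_rpow hc.ne']
      positivity
    · obtain ⟨v⟩ : Nonempty V := Fintype.card_pos_iff.1 (by omega)
      have hα : 1 ≤ G.indepNum := IsIndepSet.card_le_indepNum (t := {v}) (by simp)
      have hω : 1 ≤ G.cliqueNum := IsClique.card_le_cliqueNum (t := {v}) (tc := by simp)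
      simp only [Nat.cast_one, Real.one_rpow, Nat.one_le_cast]
      nlinarith
  obtain ⟨A, B, hA, hB, hAB⟩ := hSEH V G hG (by omega)
  rw [hn] at hA hB
  have hεn : 0 < ε * n := mul_pos hε (by exact_mod_cast (by omega : 0 < n))
  have hApos : 0 < A.ncard := by exact_mod_cast hεn.trans_le hA
  have hBpos : 0 < B.ncard := by exact_mod_cast hεn.trans_le hB
  have hsum : A.ncard + B.ncard ≤ n := by
    rw [← Set.ncard_union_eq (hAB.elim (·.1) (·.1)), ← hn, ← Nat.card_eq_fintype_card]
    exact Set.ncard_le_card _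
  have ih_induce (X : Set V) (hX : X.ncard < n) :
      (X.ncard : ℝ) ^ c ≤ ((G.induce X).indepNum * (G.induce X).cliqueNum : ℕ) :=
    ih X.ncard hX X (G.induce X) (hind G X hG)
      (by rw [← Nat.card_eq_fintype_card, Nat.card_coe_set_eq])
  calc (n : ℝ) ^ c = n ^ c / 2 + n ^ c / 2 := by ring
    _ ≤ (A.ncard : ℝ) ^ c + (B.ncard : ℝ) ^ c :=
      add_le_add (half_rpow_le_rpow_of_mul_le hε.le hc.le hεc n.cast_nonneg hA)
        (half_rpow_le_rpow_of_mul_le hε.le hc.le hεc n.cast_nonneg hB)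
    _ ≤ ((G.induce A).indepNum * (G.induce A).cliqueNum : ℕ) +
          ((G.induce B).indepNum * (G.induce B).cliqueNum : ℕ) :=
      add_le_add (ih_induce A (by omega)) (ih_induce B (by omega))
    _ ≤ (G.indepNum * G.cliqueNum : ℕ) := by
      exact_mod_cast indepNum_mul_cliqueNum_induce_add_le hAB

/-- the strong Erdős–Hajnal property implies the Erdős–Hajnal property for
hereditary classes. -/
theorem strongEH_implies_EH (𝒢 : ∀ ⦃V : Type⦄, SimpleGraph V → Prop)
    (hered : ∀ {V W : Type} (G : SimpleGraph V) (H : SimpleGraph W),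
      𝒢 G → Nonempty (H ↪g G) → 𝒢 H)
    (ε : ℝ) (hε : 0 < ε)
    (hSEH : ∀ (V : Type) [Fintype V] (G : SimpleGraph V), 𝒢 G → 1 < Fintype.card V →
      ∃ A B : Set V, ε * (Fintype.card V : ℝ) ≤ (A.ncard : ℝ) ∧
        ε * (Fintype.card V : ℝ) ≤ (B.ncard : ℝ) ∧
        (Complete G A B ∨ Anticomplete G A B)) :
    ∃ c : ℝ, 0 < c ∧ ∀ (V : Type) [Fintype V] (G : SimpleGraph V), 𝒢 G →
      (Fintype.card V : ℝ) ^ c ≤ ((max (indepNumber G) (cliqueNumber G) : ℕ) : ℝ) := by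
  obtain ⟨c, hc, hεc⟩ := exists_pos_half_le_rpow hε
  refine ⟨c / 2, half_pos hc, fun V _ G hG => ?_⟩
  rw [indepNumber_eq_indepNum, cliqueNumber_eq_cliqueNum]
  exact rpow_half_le_max_of_rpow_le_mul (Nat.cast_nonneg _)
    (rpow_card_le_indepNum_mul_cliqueNum 𝒢 (fun G s hG => hered G _ hG ⟨Embedding.induce s⟩)
      hε hc hεc hSEH V G hG)
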